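/- Let G be a group and N ∈ ℕ, and suppose every element of the derived subgroup [G,G] is a product of at most N commutators (the commutator width of G is at most N). Then every element of the subgroup G² generated by all squares is a product of at most 3N+1 squares. In particular, a group of finite commutator width has finite square width. -/

import Mathlib

/-!
In the abelianization every element of the subgroup generated by squares is itself a square,
so `g = a ^ 2 * c` with `c ∈ [G, G]`. Writing `c` as at most `N` commutators and each commutator
as three squares, `⁅x, y⁆ = x ^ 2 * (x⁻¹ * y) ^ 2 * y⁻¹ ^ 2`, gives at most `3 * N + 1` squares.
-/

variable {G : Type*} [Group G]

open scoped commutatorElement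

/-- `g` is a product of `n` commutators. -/
def IsProdOfCommutators (g : G) (n : ℕ) : Prop :=
  ∃ x y : Fin n → G, g = (List.ofFn fun i => ⁅x i, y i⁆).prod

/-- `g` is a product of `n` squares. -/
def IsProdOfSquares (g : G) (n : ℕ) : Prop :=
  ∃ x : Fin n → G, g = (List.ofFn fun i => x i ^ 2).prod

theorem IsProdOfSquares.mul {a b : G} {m n : ℕ} (ha : IsProdOfSquares a m)
    (hb : IsProdOfSquares b n) : IsProdOfSquares (a * b) (m + n) := by
  obtain ⟨x, rfl⟩ := ha
  obtain ⟨y, rfl⟩ := hb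
  refine ⟨Fin.append x y, ?_⟩
  have hsq : (fun i => Fin.append x y i ^ 2) = Fin.append (x · ^ 2) (y · ^ 2) := by
    ext i; refine Fin.addCases (fun i => ?_) (fun i => ?_) i <;> simp
  rw [hsq, List.ofFn_fin_append, List.prod_append]

theorem isProdOfSquares_sq (a : G) : IsProdOfSquares (a ^ 2) 1 :=
  ⟨fun _ => a, by simp⟩

theorem isProdOfSquares_one : IsProdOfSquares (1 : G) 0 :=
  ⟨Fin.elim0, rfl⟩

theorem commutatorElement_eq_sq_mul_sq_mul_sq (x y : G) :
    ⁅x, y⁆ = x ^ 2 * (x⁻¹ * y) ^ 2 * y⁻¹ ^ 2 := by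
  simp only [commutatorElement_def, sq]; group

theorem isProdOfSquares_commutatorElement (x y : G) : IsProdOfSquares ⁅x, y⁆ 3 := by
  rw [commutatorElement_eq_sq_mul_sq_mul_sq]
  exact ((isProdOfSquares_sq x).mul (isProdOfSquares_sq _)).mul (isProdOfSquares_sq _)

theorem IsProdOfCommutators.isProdOfSquares {g : G} {n : ℕ} (hg : IsProdOfCommutators g n) :
    IsProdOfSquares g (3 * n) := by
  induction n generalizing g with
  | zero =>
    obtain ⟨x, y, rfl⟩ := hg
    exact isProdOfSquares_one
  | succ n ih =>
    obtain ⟨x, y, rfl⟩ := hg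
    rw [List.ofFn_succ, List.prod_cons, show 3 * (n + 1) = 3 + 3 * n by ring]
    exact (isProdOfSquares_commutatorElement _ _).mul (ih ⟨_, _, rfl⟩)

theorem closure_squares_le_comap_range_powMonoidHom {A : Type*} [CommGroup A] (f : G →* A) :
    Subgroup.closure {x : G | ∃ y : G, x = y ^ 2} ≤ (powMonoidHom 2 : A →* A).range.comap f := by
  rw [Subgroup.closure_le]
  rintro _ ⟨y, rfl⟩
  exact ⟨f y, (map_pow f y 2).symm⟩

theorem exists_inv_sq_mul_mem_commutator {g : G}
    (hg : g ∈ Subgroup.closure {x : G | ∃ y : G, x = y ^ 2}) :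
    ∃ a : G, (a ^ 2)⁻¹ * g ∈ commutator G := by
  obtain ⟨b, hb⟩ := closure_squares_le_comap_range_powMonoidHom Abelianization.of hg
  obtain ⟨a, rfl⟩ := QuotientGroup.mk'_surjective (commutator G) b
  refine ⟨a, ?_⟩
  rw [← Abelianization.ker_of, MonoidHom.mem_ker, map_mul, map_inv, map_pow]
  exact inv_mul_eq_one.2 hb

theorem statement14 {G : Type*} [Group G] (N : ℕ)
    (h : ∀ g ∈ commutator G, ∃ n ≤ N, IsProdOfCommutators g n) :
    ∀ g ∈ Subgroup.closure {x : G | ∃ y : G, x = y ^ 2},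
      ∃ n ≤ 3 * N + 1, IsProdOfSquares g n := by
  intro g hg
  obtain ⟨a, ha⟩ := exists_inv_sq_mul_mem_commutator hg
  obtain ⟨n, hn, hc⟩ := h _ ha
  refine ⟨1 + 3 * n, by omega, ?_⟩
  simpa only [mul_inv_cancel_left] using (isProdOfSquares_sq a).mul hc.isProdOfSquares
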